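/- arXiv:1809.05873 — 2 statements merged into one kernel-verified Lean document; each statement's English description precedes it below -/
import Mathlib

section
/- An Archimedean pre-Riesz space X with Riesz completion (X^ρ, i) is pervasive if and only if for every y ∈ X^ρ with y > 0 one has y = sup{x ∈ i(X) : 0 < x ≤ y}. -/
open Set Filter

section Prelude

variable {E F : Type*}

/-- A linear map is bipositive if `0 ≤ x ↔ 0 ≤ i x`. -/
def IsBipositive [AddCommGroup E] [PartialOrder E] [AddCommGroup F] [PartialOrder F]
    [Module ℝ E] [Module ℝ F] (i : E →ₗ[ℝ] F) : Prop :=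
  ∀ x : E, 0 ≤ x ↔ 0 ≤ i x

/-- The range of `i` is order dense in `F`. -/
def OrderDenseRange [AddCommGroup E] [PartialOrder E] [AddCommGroup F] [PartialOrder F]
    [Module ℝ E] [Module ℝ F] (i : E →ₗ[ℝ] F) : Prop :=
  ∀ y : F, IsGLB {z : F | z ∈ Set.range i ∧ y ≤ z} y

/-- The range of `i` is majorizing in `F`. -/
def MajorizingRange [AddCommGroup E] [PartialOrder E] [AddCommGroup F] [PartialOrder F]
    [Module ℝ E] [Module ℝ F] (i : E →ₗ[ℝ] F) : Prop :=
  ∀ y : F, ∃ x : E, y ≤ i x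

/-- Pre-Riesz space property. -/
def IsPreRiesz (E : Type*) [AddCommGroup E] [PartialOrder E] [Module ℝ E] : Prop :=
  ∀ x y z : E, upperBounds {x + y, x + z} ⊆ upperBounds {y, z} → 0 ≤ x

/-- Archimedean property of a partially ordered group. -/
def ArchimedeanOrder' (E : Type*) [AddCommGroup E] [PartialOrder E] : Prop :=
  ∀ x y : E, (∀ n : ℕ, n • x ≤ y) → x ≤ 0

/-- Pervasiveness of the embedding `i` of a pre-Riesz space into a vector lattice cover. -/
def Pervasive [AddCommGroup E] [PartialOrder E] [AddCommGroup F] [PartialOrder F]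
    [Module ℝ E] [Module ℝ F] (i : E →ₗ[ℝ] F) : Prop :=
  ∀ y : F, 0 < y → ∃ x : E, 0 < i x ∧ i x ≤ y

/-- Dedekind completeness of a partially ordered set. -/
def DedekindComplete (F : Type*) [Preorder F] : Prop :=
  ∀ S : Set F, S.Nonempty → BddAbove S → ∃ a, IsLUB S a

/-- Regular seminorm. -/
def IsRegularSeminorm [AddCommGroup E] [PartialOrder E] [Module ℝ E]
    (p : Seminorm ℝ E) : Prop :=
  ∀ x : E, p x = sInf (p '' {y : E | -y ≤ x ∧ x ≤ y})

/-- Monotone seminorm. -/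
def IsMonotoneSeminorm [AddCommGroup E] [PartialOrder E] [Module ℝ E]
    (p : Seminorm ℝ E) : Prop :=
  ∀ x y : E, 0 ≤ x → x ≤ y → p x ≤ p y

/-- Semimonotone seminorm. -/
def IsSemimonotoneSeminorm [AddCommGroup E] [PartialOrder E] [Module ℝ E]
    (p : Seminorm ℝ E) : Prop :=
  ∃ C : ℝ, 0 < C ∧ ∀ x y : E, 0 ≤ x → x ≤ y → p x ≤ C * p y

/-- The regular extension of the seminorm `p` along the embedding `i`. -/
noncomputable def regExt [AddCommGroup E] [PartialOrder E] [AddCommGroup F] [PartialOrder F]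
    [Module ℝ E] [Module ℝ F] (p : Seminorm ℝ E) (i : E →ₗ[ℝ] F) (y : F) : ℝ :=
  sInf (p '' {x : E | -(i x) ≤ y ∧ y ≤ i x})

/-- Order convergence of a net: there is a set `D` downward directed with infimum `0`
such that eventually `±(x α - l) ≤ d` for every `d ∈ D`. -/
def OrderConvergesTo [AddCommGroup F] [PartialOrder F] {ι : Type*} [Preorder ι]
    (x : ι → F) (l : F) : Prop :=
  ∃ D : Set F, D.Nonempty ∧ DirectedOn (· ≥ ·) D ∧ IsGLB D 0 ∧
    ∀ d ∈ D, ∃ α₀ : ι, ∀ α, α₀ ≤ α → -d ≤ x α - l ∧ x α - l ≤ d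

/-- Order continuity of a seminorm-like function: order convergent nets are sent to
norm-null nets. -/
def OrderContinuousSemFun [AddCommGroup F] [PartialOrder F] (p : F → ℝ) : Prop :=
  ∀ (ι : Type) [Preorder ι] [IsDirected ι (· ≤ ·)] [Nonempty ι],
    ∀ (x : ι → F) (l : F), OrderConvergesTo x l →
      Tendsto (fun α => p (x α - l)) atTop (nhds 0)

/-- Compactness of a map with respect to seminorm-like functions `p` (domain) and
`q` (codomain): bounded sequences are mapped to sequences with a `q`-convergent
subsequence. -/
def SCompact [AddCommGroup E] [AddCommGroup F] (p : E → ℝ) (q : F → ℝ) (T : E → F) : Prop :=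
  ∀ x : ℕ → E, (∃ M : ℝ, ∀ n, p (x n) ≤ M) →
    ∃ (φ : ℕ → ℕ) (l : F), StrictMono φ ∧
      Tendsto (fun n => q (T (x (φ n)) - l)) atTop (nhds 0)

/-- Order unit. -/
def IsOrderUnit [AddCommGroup E] [PartialOrder E] [Module ℝ E] (e : E) : Prop :=
  ∀ x : E, ∃ l : ℝ, 0 < l ∧ x ≤ l • e

/-- The order unit (semi)norm associated to `e`. -/
noncomputable def unitNorm [AddCommGroup E] [PartialOrder E] [Module ℝ E] (e x : E) : ℝ :=
  sInf {l : ℝ | 0 < l ∧ -(l • e) ≤ x ∧ x ≤ l • e}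

/-- A linear functional bounded with respect to a seminorm-like function `p`. -/
def BddLin [AddCommGroup E] [Module ℝ E] (p : E → ℝ) (f : E →ₗ[ℝ] ℝ) : Prop :=
  ∃ C : ℝ, ∀ x, |f x| ≤ C * p x

end Prelude


/-!
If `y > 0` had an upper bound `u` of `{z ∈ i(X) : 0 < z ≤ y}` with `y ≰ u`, pervasiveness would give
`0 < i x ≤ y - y ⊓ u`; then every multiple `n • i x` stays below `y ⊓ u ≤ u`, and since `u` is
majorized by `i(X)` the Archimedean property of `X` forces `x ≤ 0`. Conversely, the supremum of
the empty set is not positive, so each of these sets contains some `0 < i x ≤ y`.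
-/

section Embedding

variable {X Y : Type*} [AddCommGroup X] [PartialOrder X] [Module ℝ X]
  [AddCommGroup Y] [PartialOrder Y] [Module ℝ Y] {i : X →ₗ[ℝ] Y}

theorem IsBipositive.map_le_map_iff [AddLeftMono X] [AddLeftMono Y] (hbi : IsBipositive i)
    {x x' : X} : i x ≤ i x' ↔ x ≤ x' := by
  rw [← sub_nonneg, ← map_sub, ← hbi, sub_nonneg]

theorem OrderDenseRange.majorizingRange [AddLeftMono Y] (hod : OrderDenseRange i) :
    MajorizingRange i := by
  intro u
  by_contra! hnone
  -- otherwise `u` is the infimum of the empty set, i.e. the top element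
  have hu : u + u ≤ u := (hod u).2 fun _ ⟨⟨x, hx⟩, hux⟩ => absurd (hx ▸ hux) (hnone x)
  exact hnone 0 (by simpa using hu)

theorem ArchimedeanOrder'.nonpos_of_forall_nsmul_map_le [AddLeftMono X] [AddLeftMono Y]
    (harch : ArchimedeanOrder' X) (hbi : IsBipositive i) (hmaj : MajorizingRange i)
    {x : X} {u : Y} (h : ∀ n : ℕ, n • i x ≤ u) : x ≤ 0 := by
  obtain ⟨x', hx'⟩ := hmaj u
  exact harch x x' fun n => hbi.map_le_map_iff.1 (by simpa using (h n).trans hx')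

end Embedding

section Lattice

variable {X Y : Type*} [AddCommGroup X] [Module ℝ X]
  [AddCommGroup Y] [Lattice Y] [AddLeftMono Y] [Module ℝ Y] {i : X →ₗ[ℝ] Y}

theorem nsmul_map_le_inf_of_le_sub_inf {y u : Y}
    (hu : u ∈ upperBounds {z : Y | z ∈ range i ∧ 0 < z ∧ z ≤ y}) (hyu : 0 ≤ y ⊓ u)
    {x : X} (hx : 0 < i x) (hxyu : i x ≤ y - y ⊓ u) (n : ℕ) : n • i x ≤ y ⊓ u := by
  induction n with
  | zero => simpa using hyu
  | succ n ih =>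
    have hle : (n + 1) • i x ≤ y :=
      calc (n + 1) • i x = n • i x + i x := succ_nsmul _ _
        _ ≤ y ⊓ u + (y - y ⊓ u) := add_le_add ih hxyu
        _ = y := add_sub_cancel _ _
    have hmem : (n + 1) • i x ∈ {z : Y | z ∈ range i ∧ 0 < z ∧ z ≤ y} :=
      ⟨⟨(n + 1) • x, map_nsmul i _ _⟩, nsmul_pos hx n.succ_ne_zero, hle⟩
    exact le_inf hle (hu hmem)

theorem Pervasive.isLUB [PartialOrder X] [AddLeftMono X] (hperv : Pervasive i)
    (harch : ArchimedeanOrder' X) (hbi : IsBipositive i) (hod : OrderDenseRange i) {y : Y} (hy : 0 < y) :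
    IsLUB {z : Y | z ∈ range i ∧ 0 < z ∧ z ≤ y} y := by
  refine ⟨fun z hz => hz.2.2, fun u hu => ?_⟩
  by_contra hyu
  obtain ⟨x₀, hx₀, hx₀y⟩ := hperv y hy
  have hyu_nonneg : 0 ≤ y ⊓ u := le_inf hy.le (hx₀.le.trans (hu ⟨⟨x₀, rfl⟩, hx₀, hx₀y⟩))
  have hgap : 0 < y - y ⊓ u :=
    sub_pos.2 (inf_le_left.lt_of_ne fun h => hyu (inf_eq_left.1 h))
  obtain ⟨x, hx, hxgap⟩ := hperv _ hgap
  have hx_nonpos : x ≤ 0 := harch.nonpos_of_forall_nsmul_map_le hbi hod.majorizingRange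
    fun n => (nsmul_map_le_inf_of_le_sub_inf hu hyu_nonneg hx hxgap n).trans inf_le_right
  exact hx.not_ge (by simpa using hbi.map_le_map_iff.2 hx_nonpos)

end Lattice

theorem Pervasive.of_forall_isLUB {X Y : Type*} [AddCommGroup X] [PartialOrder X] [Module ℝ X]
    [AddCommGroup Y] [PartialOrder Y] [Module ℝ Y] {i : X →ₗ[ℝ] Y}
    (h : ∀ y : Y, 0 < y → IsLUB {z : Y | z ∈ range i ∧ 0 < z ∧ z ≤ y} y) : Pervasive i := by
  intro y hy
  by_contra! hnone
  exact hy.not_ge <| (h y hy).2 fun _ ⟨⟨x, hx⟩, hpos, hle⟩ =>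
    absurd (hx ▸ hle) (hnone x (hx ▸ hpos))

theorem statement6_general {X Y : Type*}
    [AddCommGroup X] [PartialOrder X] [CovariantClass X X (· + ·) (· ≤ ·)]
    [Module ℝ X]
    [AddCommGroup Y] [Lattice Y] [CovariantClass Y Y (· + ·) (· ≤ ·)]
    [Module ℝ Y]
    (harch : ArchimedeanOrder' X)
    (i : X →ₗ[ℝ] Y) (hbi : IsBipositive i) (hod : OrderDenseRange i) :
    Pervasive i ↔
      ∀ y : Y, 0 < y → IsLUB {z : Y | z ∈ Set.range i ∧ 0 < z ∧ z ≤ y} y :=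
  ⟨fun hperv _ hy => hperv.isLUB harch hbi hod hy, Pervasive.of_forall_isLUB⟩

/-- an Archimedean pre-Riesz space `X` with Riesz completion `(Y, i)` is
pervasive iff every `0 < y` in `Y` is the supremum of `{x ∈ i(X) : 0 < x ≤ y}`. -/
theorem statement6 {X Y : Type*}
    [AddCommGroup X] [PartialOrder X] [CovariantClass X X (· + ·) (· ≤ ·)]
    [Module ℝ X] [PosSMulMono ℝ X]
    [AddCommGroup Y] [Lattice Y] [CovariantClass Y Y (· + ·) (· ≤ ·)]
    [Module ℝ Y] [PosSMulMono ℝ Y]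
    (hpre : IsPreRiesz X) (harch : ArchimedeanOrder' X)
    (i : X →ₗ[ℝ] Y) (hbi : IsBipositive i) (hod : OrderDenseRange i) :
    Pervasive i ↔
      ∀ y : Y, 0 < y → IsLUB {z : Y | z ∈ Set.range i ∧ 0 < z ∧ z ≤ y} y :=
  statement6_general harch i hbi hod
end

section
/- Let X, Y be normed pre-Riesz spaces with the norm on Y regular, S, T : X → Y with 0 ≤ S ≤ T, and (Y^ρ, i) the Riesz completion of Y equipped with the regular extension seminorm. If T maps a subset A of X⁺ to a norm totally bounded set in Y, then for each ε > 0 there exists u ∈ (Y^ρ)⁺ such that ‖(i(Sx) − u)⁺‖_{Y^ρ} ≤ ε for all x ∈ A. -/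
open Set Filter

/-- The regular extension of a norm along the embedding `i`. -/
noncomputable def regExtN {Y W : Type*} [Norm Y] [AddCommGroup Y] [PartialOrder Y]
    [AddCommGroup W] [PartialOrder W] [Module ℝ Y] [Module ℝ W]
    (i : Y →ₗ[ℝ] W) (w : W) : ℝ :=
  sInf {r : ℝ | ∃ z : Y, -(i z) ≤ w ∧ w ≤ i z ∧ r = ‖z‖}

/-!
Cover `T '' A` by finitely many `ε`-balls with centres `yₖ` and put `u = M ⊔ 0`, where `M` bounds
all `i yₖ` from above. If `‖T x - yₖ‖ < ε`, regularity of the norm gives `z` with `±(T x - yₖ) ≤ z` and `‖z‖ < ε`, and then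
`0 ≤ (i (S x) - u)⁺ ≤ (i (T x) - i yₖ)⁺ ≤ i z`, so `z` witnesses `‖(i (S x) - u)⁺‖ ≤ ‖z‖ < ε`.
-/

theorem IsBipositive.monotone {E F : Type*} [AddCommGroup E] [PartialOrder E] [AddLeftMono E]
    [AddCommGroup F] [PartialOrder F] [AddLeftMono F] [Module ℝ E] [Module ℝ F]
    {i : E →ₗ[ℝ] F} (hi : IsBipositive i) : Monotone i := fun a b hab => by
  simpa [sub_nonneg] using (hi (b - a)).1 (sub_nonneg.2 hab)

theorem nonneg_of_neg_le_self {α : Type*} [Lattice α] [AddCommGroup α] [AddLeftMono α] {a : α}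
    (h : -a ≤ a) : 0 ≤ a := by
  simpa [abs, sup_eq_left.2 h] using abs_nonneg a

theorem exists_neg_le_le_norm_lt {Y : Type*} [NormedAddCommGroup Y] [PartialOrder Y] {y : Y}
    (hreg : ‖y‖ = sInf {r : ℝ | ∃ z : Y, -z ≤ y ∧ y ≤ z ∧ r = ‖z‖}) {ε : ℝ} (hy : ‖y‖ < ε) :
    ∃ z : Y, -z ≤ y ∧ y ≤ z ∧ ‖z‖ < ε := by
  rcases Set.eq_empty_or_nonempty {r : ℝ | ∃ z : Y, -z ≤ y ∧ y ≤ z ∧ r = ‖z‖} with hemp | hne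
  · rw [hemp, Real.sInf_empty, norm_eq_zero] at hreg
    subst hreg
    exact ⟨0, by simp, le_rfl, hy⟩
  · obtain ⟨r, ⟨z, hzl, hzu, rfl⟩, hzε⟩ := exists_lt_of_csInf_lt hne (hreg ▸ hy)
    exact ⟨z, hzl, hzu, hzε⟩

theorem regExtN_le {Y W : Type*} [SeminormedAddCommGroup Y] [PartialOrder Y]
    [AddCommGroup W] [PartialOrder W] [Module ℝ Y] [Module ℝ W]
    (i : Y →ₗ[ℝ] W) {w : W} {z : Y} (hl : -(i z) ≤ w) (hu : w ≤ i z) : regExtN i w ≤ ‖z‖ :=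
  csInf_le ⟨0, by rintro r ⟨z', -, -, rfl⟩; exact norm_nonneg z'⟩ ⟨z, hl, hu, rfl⟩

theorem statement15_general {X Y W : Type*}
    [NormedAddCommGroup X] [NormedSpace ℝ X] [PartialOrder X]
    [NormedAddCommGroup Y] [NormedSpace ℝ Y] [PartialOrder Y]
    [CovariantClass Y Y (· + ·) (· ≤ ·)]
    [AddCommGroup W] [Lattice W] [CovariantClass W W (· + ·) (· ≤ ·)]
    [Module ℝ W]
    (hregY : ∀ y : Y, ‖y‖ = sInf {r : ℝ | ∃ z : Y, -z ≤ y ∧ y ≤ z ∧ r = ‖z‖})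
    (i : Y →ₗ[ℝ] W) (hbi : IsBipositive i)
    (S T : X →ₗ[ℝ] Y)
    (hST : ∀ x : X, 0 ≤ x → S x ≤ T x)
    (A : Set X) (hA : A ⊆ {x : X | 0 ≤ x})
    (hTA : TotallyBounded (T '' A)) :
    ∀ ε : ℝ, 0 < ε → ∃ u : W, 0 ≤ u ∧
      ∀ x ∈ A, regExtN i ((i (S x) - u) ⊔ 0) ≤ ε := by
  intro ε hε
  obtain ⟨t, htfin, hcov⟩ := Metric.totallyBounded_iff.mp hTA ε hε
  obtain ⟨M, hM⟩ := (htfin.image i).bddAbove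
  refine ⟨M ⊔ 0, le_sup_right, fun x hx => ?_⟩
  obtain ⟨y, hyt, hxy⟩ : ∃ y ∈ t, dist (T x) y < ε := by simpa using hcov ⟨x, hx, rfl⟩
  obtain ⟨z, hzl, hzu, hzε⟩ := exists_neg_le_le_norm_lt (hregY _) (dist_eq_norm (T x) y ▸ hxy)
  have hmono := hbi.monotone
  have hiz : 0 ≤ i z := nonneg_of_neg_le_self (by simpa using hmono (hzl.trans hzu))
  have hiy : i y ≤ M ⊔ 0 := le_sup_of_le_left (hM (mem_image_of_mem i hyt))
  refine (regExtN_le i ((neg_nonpos.2 hiz).trans le_sup_right) (sup_le ?_ hiz)).trans hzε.le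
  calc i (S x) - M ⊔ 0 ≤ i (T x) - i y := sub_le_sub (hmono (hST x (hA hx))) hiy
    _ = i (T x - y) := (map_sub i _ _).symm
    _ ≤ i z := hmono hzu

/-- an approximation property in the Riesz completion `(Y^ρ, i)`:
if `T` maps `A ⊆ X⁺` to a norm totally bounded set, then for each `ε > 0` there is
`u ∈ (Y^ρ)⁺` with `‖(i (S x) - u)⁺‖ ≤ ε` for all `x ∈ A`. -/
theorem statement15 {X Y W : Type*}
    [NormedAddCommGroup X] [NormedSpace ℝ X] [PartialOrder X]
    [CovariantClass X X (· + ·) (· ≤ ·)] [PosSMulMono ℝ X]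
    [NormedAddCommGroup Y] [NormedSpace ℝ Y] [PartialOrder Y]
    [CovariantClass Y Y (· + ·) (· ≤ ·)] [PosSMulMono ℝ Y]
    [AddCommGroup W] [Lattice W] [CovariantClass W W (· + ·) (· ≤ ·)]
    [Module ℝ W] [PosSMulMono ℝ W]
    (hpreX : IsPreRiesz X) (hpreY : IsPreRiesz Y)
    (hregY : ∀ y : Y, ‖y‖ = sInf {r : ℝ | ∃ z : Y, -z ≤ y ∧ y ≤ z ∧ r = ‖z‖})
    (i : Y →ₗ[ℝ] W) (hbi : IsBipositive i) (hod : OrderDenseRange i)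
    (S T : X →ₗ[ℝ] Y)
    (hSpos : ∀ x : X, 0 ≤ x → 0 ≤ S x)
    (hST : ∀ x : X, 0 ≤ x → S x ≤ T x)
    (A : Set X) (hA : A ⊆ {x : X | 0 ≤ x})
    (hTA : TotallyBounded (T '' A)) :
    ∀ ε : ℝ, 0 < ε → ∃ u : W, 0 ≤ u ∧
      ∀ x ∈ A, regExtN i ((i (S x) - u) ⊔ 0) ≤ ε :=
  statement15_general hregY i hbi S T hST A hA hTA
end
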